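/- arXiv:math/0305070 — 4 statements merged into one kernel-verified Lean document; each statement's English description precedes it below -/
import Mathlib

section
/- Let G be an abelian group. Suppose two families of functions (E0,E1,E2,H1,H2,T0,T1,T2,T3,Q2,Q3,Q4) and (E0',E1',E2',H1',H2',T0',T1',T2',T3',Q2',Q3',Q4'), all maps ℤ → G, each satisfy the Δ₁ relations (E2(m) = -E0(m) = H2(m), E1(m) = H1(m), T0(m) = T3(m), T1(m) = T2(m), 2·H1(m) = 0, H1(m) = H1(m-1), 2·Q2(m) = 0, Q2(m) = Q2(m-1), H2(m) - H2(m-1) = T3(m) - T2(m), Q4(m) - Q3(m) = T3(m) - T3(m-1), Q3(m) - Q2(m) = T2(m) - T2(m-1) for all m, and the primed analogues). If T2 = T2', H2 = H2', H1(0) = H1'(0) and Q2(0) = Q2'(0), then all twelve pairs of functions agree: E0 = E0', E1 = E1', E2 = E2', H1 = H1', T0 = T0', T1 = T1', T3 = T3', Q2 = Q2', Q3 = Q3', Q4 = Q4'. -/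
private lemma const_of_shift {G : Type*} [AddCommGroup G] (f : ℤ → G)
    (h : ∀ m, f m = f (m - 1)) : ∀ m, f m = f 0 := by
  intro m
  induction m using Int.induction_on with
  | zero => rfl
  | succ n ih => rw [show f (n+1) = f ((n+1)-1) from h _, add_sub_cancel_right]; exact ih
  | pred n ih => rw [show f (-(n:ℤ)) = f (-(n:ℤ)-1) from h _] at ih; exact ih

theorem delta1_determined_by_free_values {G : Type*} [AddCommGroup G]
    (E0 E1 E2 H1 H2 T0 T1 T2 T3 Q2 Q3 Q4 : ℤ → G)
    (E0' E1' E2' H1' H2' T0' T1' T2' T3' Q2' Q3' Q4' : ℤ → G)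
    (h1 : ∀ m, E2 m = - E0 m) (h2 : ∀ m, E2 m = H2 m)
    (h3 : ∀ m, E1 m = H1 m)
    (h4 : ∀ m, T0 m = T3 m) (h5 : ∀ m, T1 m = T2 m)
    (h6 : ∀ m, 2 • H1 m = 0) (h7 : ∀ m, H1 m = H1 (m - 1))
    (h8 : ∀ m, 2 • Q2 m = 0) (h9 : ∀ m, Q2 m = Q2 (m - 1))
    (h10 : ∀ m, H2 m - H2 (m - 1) = T3 m - T2 m)
    (h11 : ∀ m, Q4 m - Q3 m = T3 m - T3 (m - 1))
    (h12 : ∀ m, Q3 m - Q2 m = T2 m - T2 (m - 1))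
    (h1' : ∀ m, E2' m = - E0' m) (h2' : ∀ m, E2' m = H2' m)
    (h3' : ∀ m, E1' m = H1' m)
    (h4' : ∀ m, T0' m = T3' m) (h5' : ∀ m, T1' m = T2' m)
    (h6' : ∀ m, 2 • H1' m = 0) (h7' : ∀ m, H1' m = H1' (m - 1))
    (h8' : ∀ m, 2 • Q2' m = 0) (h9' : ∀ m, Q2' m = Q2' (m - 1))
    (h10' : ∀ m, H2' m - H2' (m - 1) = T3' m - T2' m)
    (h11' : ∀ m, Q4' m - Q3' m = T3' m - T3' (m - 1))
    (h12' : ∀ m, Q3' m - Q2' m = T2' m - T2' (m - 1))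
    (hT2 : T2 = T2') (hH2 : H2 = H2')
    (hH1 : H1 0 = H1' 0) (hQ2 : Q2 0 = Q2' 0) :
    E0 = E0' ∧ E1 = E1' ∧ E2 = E2' ∧ H1 = H1' ∧ T0 = T0' ∧ T1 = T1'
      ∧ T3 = T3' ∧ Q2 = Q2' ∧ Q3 = Q3' ∧ Q4 = Q4' := by

  have hH1f : H1 = H1' := by
    funext m
    rw [const_of_shift H1 h7 m, const_of_shift H1' h7' m, hH1]
  have hQ2f : Q2 = Q2' := by
    funext m
    rw [const_of_shift Q2 h9 m, const_of_shift Q2' h9' m, hQ2]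
  have hT3 : T3 = T3' := by
    funext m
    have := h10 m
    have := h10' m
    have e : T3 m - T2 m = T3' m - T2' m := by rw [← h10, ← h10', hH2]
    rw [hT2] at e
    have := sub_left_injective e
    exact sub_left_injective e
  have hQ3 : Q3 = Q3' := by
    funext m
    have e : Q3 m - Q2 m = Q3' m - Q2' m := by rw [h12, h12', hT2]
    calc Q3 m = (Q3 m - Q2 m) + Q2 m := by abel
    _ = (Q3' m - Q2' m) + Q2' m := by rw [e, hQ2f]
    _ = Q3' m := by abel
  have hQ4 : Q4 = Q4' := by
    funext m
    calc Q4 m = (Q4 m - Q3 m) + Q3 m := by abel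
    _ = (Q4' m - Q3' m) + Q3' m := by rw [h11, h11', hT3, hQ3]
    _ = Q4' m := by abel
  refine ⟨funext fun m => ?_, funext fun m => ?_, funext fun m => ?_, hH1f,
    funext fun m => ?_, funext fun m => ?_, hT3, hQ2f, hQ3, hQ4⟩
  · have : - E0 m = - E0' m := by rw [← h1, ← h1', h2, h2', hH2]
    exact neg_injective this
  · rw [h3, h3', hH1f]
  · rw [h2, h2', hH2]
  · rw [h4, h4', hT3]
  · rw [h5, h5', hT2]
end

section
/- Let O be the free abelian group on generators {x_n : n ∈ ℤ} ∪ {y_n : n ∈ ℤ}. Let S ⊆ O be the subgroup generated by all elements of the form x_m - x_{m-2} and x_{m-1} + x_{m-2} + y_m for m ∈ ℤ. Then an element ∑_m A_m x_m + ∑_m B_m y_m of O (with A_m, B_m ∈ ℤ finitely supported) lies in S if and only if ∑_m A_{2m} = ∑_m A_{2m+1} = ∑_m B_m. -/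
/-- The free abelian group on `{x_n}_{n∈ℤ} ∪ {y_n}_{n∈ℤ}`. -/
abbrev O : Type := (ℤ ⊕ ℤ) →₀ ℤ

/-- The generator `x_n`. -/
noncomputable def x (n : ℤ) : O := Finsupp.single (Sum.inl n) 1

/-- The generator `y_n`. -/
noncomputable def y (n : ℤ) : O := Finsupp.single (Sum.inr n) 1

/-- The subgroup generated by the elements `x_m - x_{m-2}` and `x_{m-1} + x_{m-2} + y_m`. -/
noncomputable def S : AddSubgroup O :=
  AddSubgroup.closure ((Set.range fun m : ℤ => x m - x (m - 2)) ∪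
    (Set.range fun m : ℤ => x (m - 1) + x (m - 2) + y m))

open Function Classical

section aux

variable {g : ℤ → ℤ ⊕ ℤ}

lemma hfin (hg : Injective g) (u : O) : (Function.support fun m => u (g m)).Finite := by
  apply ((u.support.finite_toSet).preimage hg.injOn).subset
  intro m hm
  simp only [Function.mem_support] at hm
  simpa using hm

lemma Gadd (hg : Injective g) (z w : O) :
    (∑ᶠ m, (z + w) (g m)) = (∑ᶠ m, z (g m)) + ∑ᶠ m, w (g m) := by
  simp only [Finsupp.add_apply]
  exact finsum_add_distrib (hfin hg z) (hfin hg w)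

lemma Gneg (z : O) : (∑ᶠ m, (-z) (g m)) = -∑ᶠ m, z (g m) := by
  simp only [Finsupp.neg_apply]
  exact finsum_neg_distrib _

lemma Gsingle (hg : Injective g) (a : ℤ ⊕ ℤ) (k : ℤ) :
    (∑ᶠ m, (Finsupp.single a k : O) (g m)) = if a ∈ Set.range g then k else 0 := by
  by_cases h : a ∈ Set.range g
  · obtain ⟨m0, rfl⟩ := h
    rw [finsum_eq_single _ m0, Finsupp.single_apply, if_pos rfl, if_pos ⟨m0, rfl⟩]
    intro m hm
    rw [Finsupp.single_apply, if_neg (fun he => hm (hg he.symm))]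
  · rw [if_neg h]
    apply finsum_eq_zero_of_forall_eq_zero
    intro m
    rw [Finsupp.single_apply, if_neg (fun he => h ⟨m, he.symm⟩)]

lemma Gx (hg : Injective g) (n : ℤ) :
    (∑ᶠ m, (x n) (g m)) = if Sum.inl n ∈ Set.range g then 1 else 0 := Gsingle hg _ _

lemma Gy (hg : Injective g) (n : ℤ) :
    (∑ᶠ m, (y n) (g m)) = if Sum.inr n ∈ Set.range g then 1 else 0 := Gsingle hg _ _

lemma Gsum (hg : Injective g) (z : O) :
    (∑ᶠ m, z (g m)) = ∑ a ∈ z.support, if a ∈ Set.range g then z a else 0 := by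
  rw [finsum_eq_finset_sum_of_support_subset _
    (s := z.support.preimage g hg.injOn) ?_]
  · rw [Finset.sum_preimage' g z.support hg.injOn (fun a => z a), Finset.sum_filter]
  · intro m hm
    simp only [Function.mem_support] at hm
    simpa using hm

end aux

/-- The three index embeddings. -/
def g1 : ℤ → ℤ ⊕ ℤ := fun m => Sum.inl (2 * m)
def g2 : ℤ → ℤ ⊕ ℤ := fun m => Sum.inl (2 * m + 1)
def g3 : ℤ → ℤ ⊕ ℤ := Sum.inr

lemma hg1 : Injective g1 := fun a b h => by
  simp only [g1, Sum.inl.injEq] at h; omega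

lemma hg2 : Injective g2 := fun a b h => by
  simp only [g2, Sum.inl.injEq] at h; omega

lemma hg3 : Injective g3 := fun a b h => by
  simpa [g3] using h

lemma mem_range_g1 (n : ℤ) : Sum.inl n ∈ Set.range g1 ↔ Even n := by
  constructor
  · rintro ⟨m, hm⟩
    simp only [g1, Sum.inl.injEq] at hm
    exact ⟨m, by omega⟩
  · rintro ⟨r, hr⟩
    exact ⟨r, by simp only [g1, Sum.inl.injEq]; omega⟩

lemma mem_range_g2 (n : ℤ) : Sum.inl n ∈ Set.range g2 ↔ ¬ Even n := by
  constructor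
  · rintro ⟨m, hm⟩ ⟨r, hr⟩
    simp only [g2, Sum.inl.injEq] at hm
    omega
  · intro h
    rw [Int.not_even_iff_odd] at h
    obtain ⟨r, hr⟩ := h
    exact ⟨r, by simp only [g2, Sum.inl.injEq]; omega⟩

lemma inr_not_mem_range_g1 (n : ℤ) : Sum.inr n ∉ Set.range g1 := by
  rintro ⟨m, hm⟩; simp [g1] at hm

lemma inr_not_mem_range_g2 (n : ℤ) : Sum.inr n ∉ Set.range g2 := by
  rintro ⟨m, hm⟩; simp [g2] at hm

lemma inl_not_mem_range_g3 (n : ℤ) : Sum.inl n ∉ Set.range g3 := by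
  rintro ⟨m, hm⟩; simp [g3] at hm

lemma inr_mem_range_g3 (n : ℤ) : Sum.inr n ∈ Set.range g3 := ⟨n, rfl⟩

/-- Membership of the first family of generators. -/
lemma gen1_mem (m : ℤ) : x m - x (m - 2) ∈ S :=
  AddSubgroup.subset_closure (Or.inl ⟨m, rfl⟩)

/-- Membership of the second family of generators. -/
lemma gen2_mem (m : ℤ) : x (m - 1) + x (m - 2) + y m ∈ S :=
  AddSubgroup.subset_closure (Or.inr ⟨m, rfl⟩)

lemma heven (k : ℤ) : x (2 * k) - x 0 ∈ S := by
  induction k using Int.induction_on with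
  | zero => simpa using zero_mem S
  | succ i ih =>
      have h := gen1_mem (2 * (i + 1))
      have e : x (2 * (i + 1)) - x 0 =
          (x (2 * (i + 1)) - x (2 * (i + 1) - 2)) + (x (2 * i) - x 0) := by
        rw [show (2 : ℤ) * (i + 1) - 2 = 2 * i by ring]; abel
      rw [e]
      exact add_mem h ih
  | pred i ih =>
      have h := gen1_mem (2 * (-i))
      have e : x (2 * (-(i : ℤ) - 1)) - x 0 =
          -(x (2 * (-(i : ℤ))) - x (2 * (-(i : ℤ)) - 2)) + (x (2 * (-(i : ℤ))) - x 0) := by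
        rw [show (2 : ℤ) * (-(i : ℤ)) - 2 = 2 * (-(i : ℤ) - 1) by ring]; abel
      rw [e]
      exact add_mem (neg_mem h) ih

lemma hodd (k : ℤ) : x (2 * k + 1) - x 1 ∈ S := by
  induction k using Int.induction_on with
  | zero => simpa using zero_mem S
  | succ i ih =>
      have h := gen1_mem (2 * (i + 1) + 1)
      have e : x (2 * (i + 1) + 1) - x 1 =
          (x (2 * (i + 1) + 1) - x (2 * (i + 1) + 1 - 2)) + (x (2 * i + 1) - x 1) := by
        rw [show (2 : ℤ) * (i + 1) + 1 - 2 = 2 * i + 1 by ring]; abel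
      rw [e]
      exact add_mem h ih
  | pred i ih =>
      have h := gen1_mem (2 * (-i) + 1)
      have e : x (2 * (-(i : ℤ) - 1) + 1) - x 1 =
          -(x (2 * (-(i : ℤ)) + 1) - x (2 * (-(i : ℤ)) + 1 - 2)) + (x (2 * (-(i : ℤ)) + 1) - x 1) := by
        rw [show (2 : ℤ) * (-(i : ℤ)) + 1 - 2 = 2 * (-(i : ℤ) - 1) + 1 by ring]; abel
      rw [e]
      exact add_mem (neg_mem h) ih

lemma x_even_mem (n : ℤ) (h : Even n) : x n - x 0 ∈ S := by
  obtain ⟨r, hr⟩ := h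
  have := heven r
  rwa [show 2 * r = n by omega] at this

lemma x_odd_mem (n : ℤ) (h : ¬ Even n) : x n - x 1 ∈ S := by
  rw [Int.not_even_iff_odd] at h
  obtain ⟨r, hr⟩ := h
  have := hodd r
  rwa [show 2 * r + 1 = n by omega] at this

lemma y_mem (n : ℤ) : y n + x 0 + x 1 ∈ S := by
  have h2 := gen2_mem n
  by_cases hn : Even n
  · have ho : ¬ Even (n - 1) := by
      rw [Int.not_even_iff_odd]; obtain ⟨r, hr⟩ := hn; exact ⟨r - 1, by omega⟩
    have he : Even (n - 2) := by obtain ⟨r, hr⟩ := hn; exact ⟨r - 1, by omega⟩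
    have e : y n + x 0 + x 1 =
        (x (n - 1) + x (n - 2) + y n) - (x (n - 1) - x 1) - (x (n - 2) - x 0) := by abel
    rw [e]
    exact sub_mem (sub_mem h2 (x_odd_mem _ ho)) (x_even_mem _ he)
  · have he : Even (n - 1) := by
      rw [Int.not_even_iff_odd] at hn; obtain ⟨r, hr⟩ := hn; exact ⟨r, by omega⟩
    have ho : ¬ Even (n - 2) := by
      rw [Int.not_even_iff_odd] at hn ⊢; obtain ⟨r, hr⟩ := hn; exact ⟨r - 1, by omega⟩
    have e : y n + x 0 + x 1 =
        (x (n - 1) + x (n - 2) + y n) - (x (n - 1) - x 0) - (x (n - 2) - x 1) := by abel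
    rw [e]
    exact sub_mem (sub_mem h2 (x_even_mem _ he)) (x_odd_mem _ ho)

/-- The "reduction map" on basis elements. -/
noncomputable def r : ℤ ⊕ ℤ → O
  | Sum.inl n => if Even n then x 0 else x 1
  | Sum.inr _ => -(x 0 + x 1)

lemma hbasic (a : ℤ ⊕ ℤ) : (Finsupp.single a 1 : O) - r a ∈ S := by
  cases a with
  | inl n =>
      by_cases h : Even n
      · simpa [r, h, x] using x_even_mem n h
      · simpa [r, h, x] using x_odd_mem n h
  | inr n =>
      have e : (Finsupp.single (Sum.inr n) 1 : O) - r (Sum.inr n) = y n + x 0 + x 1 := by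
        simp only [r, y]; abel
      rw [e]
      exact y_mem n

lemma r_eq (a : ℤ ⊕ ℤ) :
    r a = ((if a ∈ Set.range g1 then (1 : ℤ) else 0) - (if a ∈ Set.range g3 then 1 else 0)) • x 0
      + ((if a ∈ Set.range g2 then (1 : ℤ) else 0) - (if a ∈ Set.range g3 then 1 else 0)) • x 1 := by
  cases a with
  | inl n =>
      by_cases h : Even n
      · rw [if_neg (inl_not_mem_range_g3 n), if_pos ((mem_range_g1 n).2 h),
          if_neg (fun hh => (mem_range_g2 n).1 hh h)]
        simp [r, h]
      · rw [if_neg (inl_not_mem_range_g3 n), if_neg (fun hh => h ((mem_range_g1 n).1 hh)),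
          if_pos ((mem_range_g2 n).2 h)]
        simp [r, h]
  | inr n =>
      rw [if_neg (inr_not_mem_range_g1 n), if_neg (inr_not_mem_range_g2 n),
        if_pos (inr_mem_range_g3 n)]
      simp only [r, zero_sub, neg_smul, one_smul]
      abel

theorem mem_S_iff (z : O) :
    z ∈ S ↔
      (∑ᶠ m : ℤ, z (Sum.inl (2 * m))) = (∑ᶠ m : ℤ, z (Sum.inl (2 * m + 1))) ∧
      (∑ᶠ m : ℤ, z (Sum.inl (2 * m + 1))) = (∑ᶠ m : ℤ, z (Sum.inr m)) := by
  suffices h : z ∈ S ↔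
      ((∑ᶠ m : ℤ, z (g1 m)) = (∑ᶠ m : ℤ, z (g2 m)) ∧
        (∑ᶠ m : ℤ, z (g2 m)) = (∑ᶠ m : ℤ, z (g3 m))) from h
  constructor
  · intro hz
    refine AddSubgroup.closure_induction
      (p := fun w _ => ((∑ᶠ m : ℤ, w (g1 m)) = (∑ᶠ m : ℤ, w (g2 m)) ∧
        (∑ᶠ m : ℤ, w (g2 m)) = (∑ᶠ m : ℤ, w (g3 m))))
      ?_ ?_ ?_ ?_ hz
    · rintro w (⟨m, rfl⟩ | ⟨m, rfl⟩)
      · have D : ∀ (g : ℤ → ℤ ⊕ ℤ), Injective g →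
            (∑ᶠ k : ℤ, (x m - x (m - 2)) (g k)) =
            (if Sum.inl m ∈ Set.range g then 1 else 0)
              - (if Sum.inl (m - 2) ∈ Set.range g then 1 else 0) := by
          intro g hg
          rw [sub_eq_add_neg, Gadd hg, Gneg, Gx hg, Gx hg]
          ring
        have hpar : Even (m - 2) ↔ Even m := by
          constructor <;> rintro ⟨c, hc⟩
          · exact ⟨c + 1, by omega⟩
          · exact ⟨c - 1, by omega⟩
        dsimp only
        constructor
        · rw [D g1 hg1, D g2 hg2]
          simp only [mem_range_g1, mem_range_g2, hpar]
          by_cases h : Even m <;> simp [h]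
        · rw [D g2 hg2, D g3 hg3]
          simp only [mem_range_g2, hpar]
          rw [if_neg (inl_not_mem_range_g3 m), if_neg (inl_not_mem_range_g3 (m - 2))]
          by_cases h : Even m <;> simp [h]
      · have D : ∀ (g : ℤ → ℤ ⊕ ℤ), Injective g →
            (∑ᶠ k : ℤ, (x (m - 1) + x (m - 2) + y m) (g k)) =
            (if Sum.inl (m - 1) ∈ Set.range g then 1 else 0)
              + (if Sum.inl (m - 2) ∈ Set.range g then 1 else 0)
              + (if Sum.inr m ∈ Set.range g then 1 else 0) := by
          intro g hg
          rw [Gadd hg, Gadd hg, Gx hg, Gx hg, Gy hg]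
        have hpar1 : Even (m - 1) ↔ ¬ Even m := by
          constructor
          · rintro ⟨c, hc⟩ ⟨d, hd⟩; omega
          · intro h
            rw [Int.not_even_iff_odd] at h
            obtain ⟨c, hc⟩ := h
            exact ⟨c, by omega⟩
        have hpar2 : Even (m - 2) ↔ Even m := by
          constructor <;> rintro ⟨c, hc⟩
          · exact ⟨c + 1, by omega⟩
          · exact ⟨c - 1, by omega⟩
        dsimp only
        constructor
        · rw [D g1 hg1, D g2 hg2]
          simp only [mem_range_g1, mem_range_g2, hpar1, hpar2]
          rw [if_neg (inr_not_mem_range_g1 m), if_neg (inr_not_mem_range_g2 m)]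
          by_cases h : Even m <;> simp [h]
        · rw [D g2 hg2, D g3 hg3]
          simp only [mem_range_g2, hpar1, hpar2]
          rw [if_neg (inr_not_mem_range_g2 m), if_neg (inl_not_mem_range_g3 (m - 1)),
            if_neg (inl_not_mem_range_g3 (m - 2)), if_pos (inr_mem_range_g3 m)]
          by_cases h : Even m <;> simp [h]
    · simp
    · intro a b _ _ h1 h2
      rw [Gadd hg1, Gadd hg2, Gadd hg3]
      exact ⟨by rw [h1.1, h2.1], by rw [h1.2, h2.2]⟩
    · intro a _ h1
      rw [Gneg, Gneg, Gneg]
      exact ⟨by rw [h1.1], by rw [h1.2]⟩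
  · rintro ⟨h12, h23⟩
    have hT : z - ∑ a ∈ z.support, z a • r a ∈ S := by
      have e : z - ∑ a ∈ z.support, z a • r a =
          ∑ a ∈ z.support, (Finsupp.single a (z a) - z a • r a) := by
        rw [Finset.sum_sub_distrib]
        congr 1
        exact (Finsupp.sum_single z).symm
      rw [e]
      refine sum_mem fun a _ => ?_
      have e2 : Finsupp.single a (z a) - z a • r a = z a • ((Finsupp.single a 1 : O) - r a) := by
        rw [smul_sub, Finsupp.smul_single', mul_one]
      rw [e2]
      exact zsmul_mem (hbasic a) _
    have hzero : (∑ a ∈ z.support, z a • r a) = 0 := by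
      have e : (∑ a ∈ z.support, z a • r a) =
          ((∑ᶠ m : ℤ, z (g1 m)) - (∑ᶠ m : ℤ, z (g3 m))) • x 0
            + ((∑ᶠ m : ℤ, z (g2 m)) - (∑ᶠ m : ℤ, z (g3 m))) • x 1 := by
        rw [Gsum hg1, Gsum hg2, Gsum hg3, ← Finset.sum_sub_distrib, ← Finset.sum_sub_distrib,
          Finset.sum_smul, Finset.sum_smul, ← Finset.sum_add_distrib]
        refine Finset.sum_congr rfl fun a _ => ?_
        rw [r_eq a, smul_add, smul_smul, smul_smul]
        congr 2 <;> simp [mul_sub, mul_ite]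
      rw [e, h12, h23, sub_self, zero_smul, zero_smul, add_zero]
    rw [hzero, sub_zero] at hT
    exact hT
end

section
/- Let O be the free abelian group on generators {x_n : n ∈ ℤ} ∪ {y_n : n ∈ ℤ}, and let S ⊆ O be the subgroup generated by the elements x_m - x_{m-2} and x_{m-1} + x_{m-2} + y_m for all m ∈ ℤ. Then O is the internal direct sum of S and the subgroup generated by x_{-2} and x_{-1}; that is, S + ⟨x_{-2}, x_{-1}⟩ = O and S ∩ ⟨x_{-2}, x_{-1}⟩ = 0. -/
noncomputable def phi : O →+ ℤ × ℤ :=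
  Finsupp.liftAddHom fun a => zmultiplesHom (ℤ × ℤ)
    (Sum.elim (fun n => if Even n then ((1:ℤ),(0:ℤ)) else (0,1)) (fun _ => (-1,-1)) a)

lemma phi_x (n : ℤ) : phi (x n) = if Even n then ((1:ℤ),(0:ℤ)) else (0,1) := by
  simp [phi, x, Finsupp.liftAddHom_apply_single]

lemma phi_y (m : ℤ) : phi (y m) = (-1,-1) := by
  simp [phi, y, Finsupp.liftAddHom_apply_single]

lemma S_le_ker : S ≤ phi.ker := by
  rw [S, AddSubgroup.closure_le]
  rintro z (⟨m, rfl⟩ | ⟨m, rfl⟩) <;>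
    simp only [AddMonoidHom.mem_ker, map_sub, map_add, phi_x, phi_y, SetLike.mem_coe] <;>
    have h2 : Even (m - 2) ↔ Even m := by simp only [Int.even_iff]; omega
  · rcases em (Even m) with h | h <;> simp [h, h2]
  · have h1 : Even (m - 1) ↔ ¬ Even m := by simp only [Int.even_iff]; omega
    rcases em (Even m) with h | h <;> simp [h, h1, h2, Prod.ext_iff]

theorem S_complement :
    S ⊔ AddSubgroup.closure {x (-2), x (-1)} = ⊤ ∧
    S ⊓ AddSubgroup.closure {x (-2), x (-1)} = ⊥ := by
  set C := AddSubgroup.closure ({x (-2), x (-1)} : Set O) with hC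
  set T := S ⊔ C with hT
  have hxS : ∀ m : ℤ, x m - x (m - 2) ∈ S := fun m =>
    AddSubgroup.subset_closure (Or.inl ⟨m, rfl⟩)
  have hyS : ∀ m : ℤ, x (m - 1) + x (m - 2) + y m ∈ S := fun m =>
    AddSubgroup.subset_closure (Or.inr ⟨m, rfl⟩)
  have hST : S ≤ T := le_sup_left
  have hCT : C ≤ T := le_sup_right
  have hup : ∀ n : ℤ, x n ∈ T → x (n + 2) ∈ T := by
    intro n h
    have h1 := hST (hxS (n + 2))
    rw [show (n + 2) - 2 = n by ring] at h1
    have h2 : x (n + 2) = (x (n + 2) - x n) + x n := by abel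
    rw [h2]; exact add_mem h1 h
  have hdown : ∀ n : ℤ, x n ∈ T → x (n - 2) ∈ T := by
    intro n h
    have := hST (hxS n)
    simpa using sub_mem h this
  have hpair : ∀ k : ℤ, x (2 * k - 2) ∈ T ∧ x (2 * k - 1) ∈ T := by
    intro k
    induction k using Int.induction_on with
    | zero =>
      constructor <;> exact hCT (AddSubgroup.subset_closure (by norm_num))
    | succ k ih =>
      refine ⟨?_, ?_⟩
      · have := hup _ ih.1; convert this using 2; ring
      · have := hup _ ih.2; convert this using 2; ring
    | pred k ih =>
      refine ⟨?_, ?_⟩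
      · have := hdown _ ih.1; convert this using 2; ring
      · have := hdown _ ih.2; convert this using 2; ring
  have hx : ∀ n : ℤ, x n ∈ T := by
    intro n
    rcases Int.even_or_odd n with ⟨k, hk⟩ | ⟨k, hk⟩
    · have := (hpair (k + 1)).1
      convert this using 2; omega
    · have := (hpair (k + 1)).2
      convert this using 2; omega
  have hy : ∀ m : ℤ, y m ∈ T := by
    intro m
    have h1 := hST (hyS m)
    have : y m = (x (m - 1) + x (m - 2) + y m) - x (m - 1) - x (m - 2) := by abel
    rw [this]
    exact sub_mem (sub_mem h1 (hx _)) (hx _)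
  constructor
  · rw [eq_top_iff]
    intro z hz
    clear hz
    induction z using Finsupp.induction with
    | zero => exact zero_mem T
    | single_add a b f _ _ ih =>
      refine add_mem ?_ ih
      rcases a with n | n
      · have : (Finsupp.single (Sum.inl n) b : O) = b • x n := by
          simp [x, Finsupp.smul_single]
        rw [this]; exact zsmul_mem (hx n) b
      · have : (Finsupp.single (Sum.inr n) b : O) = b • y n := by
          simp [y, Finsupp.smul_single]
        rw [this]; exact zsmul_mem (hy n) b
  · rw [eq_bot_iff]
    rintro z ⟨hzS, hzC⟩
    rcases AddSubgroup.mem_closure_pair.mp hzC with ⟨m, n, rfl⟩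
    have h0 : phi (m • x (-2) + n • x (-1)) = 0 := S_le_ker hzS
    rw [map_add, map_zsmul, map_zsmul, phi_x, phi_x] at h0
    norm_num [Prod.ext_iff, Int.even_iff] at h0
    simp [h0.1, h0.2]
end

section
/- Let O be the free abelian group on generators {x_n : n ∈ ℤ} ∪ {y_n : n ∈ ℤ}, S ⊆ O the subgroup generated by x_m - x_{m-2} and x_{m-1} + x_{m-2} + y_m for m ∈ ℤ, and let c = (2-g)·x_0 + (1-g)·x_{-1} for an integer g. Then c ∉ S unless 2-g = 0 and 1-g = 0 simultaneously (which is impossible); in particular c ∉ S for every integer g, so the coset c + S is a nontrivial coset of S in O. -/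
/-! Every generator of `S` is killed by the homomorphism `O → ℤ` sending `x_n ↦ (-1)^n` and
`y_n ↦ 0`, while `c` is sent to `(2 - g) - (1 - g) = 1`. -/

noncomputable def alternatingXSum : O →ₗ[ℤ] ℤ :=
  Finsupp.linearCombination ℤ (Sum.elim (fun n => (n.negOnePow : ℤ)) 0)

@[simp]
lemma alternatingXSum_x (n : ℤ) : alternatingXSum (x n) = n.negOnePow := by
  simp [alternatingXSum, x]

@[simp]
lemma alternatingXSum_y (n : ℤ) : alternatingXSum (y n) = 0 := by
  simp [alternatingXSum, y]

lemma S_le_ker_alternatingXSum : S ≤ (alternatingXSum : O →+ ℤ).ker := by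
  rw [S, AddSubgroup.closure_le]
  rintro _ (⟨m, rfl⟩ | ⟨m, rfl⟩)
  · have : m.negOnePow = (m - 2).negOnePow :=
      (Int.negOnePow_eq_iff _ _).2 ⟨1, by ring⟩
    simp [this]
  · have : (m - 1).negOnePow = -(m - 2).negOnePow := by
      rw [show m - 1 = m - 2 + 1 by ring, Int.negOnePow_succ]
    simp [this]

theorem c_not_mem_S (g : ℤ) : (2 - g) • x 0 + (1 - g) • x (-1) ∉ S := by
  intro hc
  have hker := S_le_ker_alternatingXSum hc
  simp [AddMonoidHom.mem_ker] at hker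
end
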